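/- Let A and B be independent random variables taking values in {0,1}^n, and fix i ∈ [n]. Then the conditional Shannon entropy of the i-th coordinate of the coordinatewise union satisfies H((A ∪ B)_i | A_{<i}, B_{<i}) ≥ (1/(2φ))·( Pr[A_i = 0]·H(B_i | B_{<i}) + Pr[B_i = 0]·H(A_i | A_{<i}) ), where X_{<i} denotes the tuple of coordinates (X_1, …, X_{i−1}). -/

import Mathlib

open scoped Classical in
/-- Probability of an event `E` under the probability mass function `μ`
on a finite sample space. -/
noncomputable def probOf {Ω : Type*} [Fintype Ω] (μ : Ω → ℝ) (E : Ω → Prop) : ℝ :=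
  ∑ ω, if E ω then μ ω else 0

/-- Shannon entropy (base 2) of a random variable `X` with values in a finite type,
under the probability mass function `μ` (note `Real.logb 2 0 = 0` by convention). -/
noncomputable def entropy {Ω V : Type*} [Fintype Ω] [Fintype V] (μ : Ω → ℝ) (X : Ω → V) : ℝ :=
  ∑ v : V, -(probOf μ (fun ω => X ω = v) * Real.logb 2 (probOf μ (fun ω => X ω = v)))

/-- Conditional Shannon entropy `H(X | Y) = H(X, Y) - H(Y)`. -/
noncomputable def condEntropy {Ω V W : Type*} [Fintype Ω] [Fintype V] [Fintype W]
    (μ : Ω → ℝ) (X : Ω → V) (Y : Ω → W) : ℝ :=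
  entropy μ (fun ω => (X ω, Y ω)) - entropy μ Y

/-- The tuple of coordinates `(X_1, …, X_{i-1})` of `X : {0,1}^n`. -/
def below {n : ℕ} (X : Fin n → Bool) (i : Fin n) : Fin i → Bool :=
  fun j => X ⟨j.1, j.2.trans i.2⟩

/-!
Given the prefixes `A_{<i} = a` and `B_{<i} = b`, independence gives `(A ∪ B)_i = 0` conditional
probability `x y`, where `x` and `y` are the conditional probabilities of `A_i = 0` and `B_i = 0`.
Fibre by fibre, the claim is thus Boppana's inequality `h(xy) ≥ (φ/2) (y h(x) + x h(y))` for the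
binary entropy `h`, where `φ = (1 + √5)/2` is the inverse of the constant `(√5 - 1)/2`.

With `g(u) = u h(1/u)`, the map `s ↦ g(eˢ)` is concave, which reduces Boppana's inequality to the
diagonal case `φ g(u) ≤ g(u²)` for `u ≥ 1`. The defect `g(u²) - φ g(u)` vanishes at `u = 1` and,
together with its derivative, at `u = φ`. Its second derivative is increasing up to `27/20` and
nonnegative on `[27/20, 3]`, so it changes sign once, at some `r ∈ [11/10, 27/20]`: the defect is
concave on `[1, r]`, minimal at `φ` on `[r, 3]`, and increasing beyond `3`.
-/

open Real Set
open scoped goldenRatio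

section Calculus

variable {D : Set ℝ} {f f' : ℝ → ℝ}

lemma monotoneOn_of_forall_hasDerivAt (hD : Convex ℝ D) (hf : ∀ x ∈ D, HasDerivAt f (f' x) x)
    (hf' : ∀ x ∈ D, 0 ≤ f' x) : MonotoneOn f D :=
  monotoneOn_of_hasDerivWithinAt_nonneg hD
    (fun x hx => (hf x hx).continuousAt.continuousWithinAt)
    (fun x hx => (hf x (interior_subset hx)).hasDerivWithinAt)
    fun x hx => hf' x (interior_subset hx)

lemma antitoneOn_of_forall_hasDerivAt (hD : Convex ℝ D) (hf : ∀ x ∈ D, HasDerivAt f (f' x) x)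
    (hf' : ∀ x ∈ D, f' x ≤ 0) : AntitoneOn f D :=
  antitoneOn_of_hasDerivWithinAt_nonpos hD
    (fun x hx => (hf x hx).continuousAt.continuousWithinAt)
    (fun x hx => (hf x (interior_subset hx)).hasDerivWithinAt)
    fun x hx => hf' x (interior_subset hx)

lemma HasDerivAt.comp_sq {g : ℝ → ℝ} {g' x : ℝ} (h : HasDerivAt g g' (x ^ 2)) :
    HasDerivAt (fun y => g (y ^ 2)) (g' * (2 * x)) x := by
  refine (h.comp (h := (· ^ 2)) x (hasDerivAt_pow 2 x)).congr_deriv ?_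
  ring

end Calculus

lemma goldenRatio_mem_Ioo : φ ∈ Ioo 1.6 1.62 := by
  have h₁ : 2.2 < √5 := by rw [lt_sqrt (by norm_num)]; norm_num
  have h₂ : √5 < 2.24 := by rw [sqrt_lt' (by norm_num)]; norm_num
  constructor <;> rw [goldenRatio] <;> linarith

lemma goldenRatio_sub_one : φ - 1 = φ⁻¹ := by
  rw [inv_goldenRatio, ← one_sub_goldenConj]
  ring

section LogRatio

noncomputable def logRatio (v : ℝ) : ℝ := log v - log (v - 1)

variable {v : ℝ}

lemma hasDerivAt_logRatio (hv : 1 < v) : HasDerivAt logRatio (-1 / (v * (v - 1))) v := by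
  have h := (hasDerivAt_log (by linarith : v ≠ 0)).sub
    ((hasDerivAt_log (by linarith : v - 1 ≠ 0)).comp v ((hasDerivAt_id v).sub_const 1))
  refine h.congr_deriv ?_
  field_simp [show v - 1 ≠ 0 by linarith]
  ring

lemma logRatio_sq (hv : 1 < v) : logRatio (v ^ 2) = logRatio v - logRatio (v + 1) := by
  have h : v ^ 2 - 1 = (v - 1) * (v + 1) := by ring
  simp only [logRatio, h, add_sub_cancel_right]
  rw [log_pow, log_mul (by linarith) (by linarith)]
  push_cast
  ring

lemma two_div_le_logRatio (hv : 1 < v) : 2 / (2 * v - 1) ≤ logRatio v := by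
  have h := le_hasSum (hasSum_log_one_add_inv (sub_pos.2 hv)) 0 fun k _ => by positivity
  have hlog : log (1 + (v - 1)⁻¹) = logRatio v := by
    rw [logRatio, ← log_div (by linarith) (by linarith)]
    congr 1
    field_simp [show v - 1 ≠ 0 by linarith]
    ring
  rw [hlog] at h
  refine le_of_eq_of_le ?_ h
  field_simp
  ring

lemma logRatio_le (hv : 1 < v) : logRatio v ≤ (2 * v - 1) / (2 * v * (v - 1)) := by
  have hx : 1 ≤ v / (v - 1) := (one_le_div₀ (by linarith)).2 (by linarith)
  have h := self_le_sinh_iff.2 (log_nonneg hx)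
  rw [sinh_log (by linarith), log_div (by linarith) (by linarith)] at h
  refine h.trans_eq ?_
  field_simp [show v - 1 ≠ 0 by linarith]
  ring

end LogRatio

/-- `u * binEntropy u⁻¹`, written so that it is smooth on `(1, ∞)`. -/
noncomputable def recipEntropy (u : ℝ) : ℝ := negMulLog (u - 1) - negMulLog u

@[fun_prop]
lemma continuous_recipEntropy : Continuous recipEntropy := by
  unfold recipEntropy
  fun_prop

lemma recipEntropy_inv {x : ℝ} (hx : 0 < x) : recipEntropy x⁻¹ = binEntropy x / x := by
  have h : x⁻¹ - 1 = x⁻¹ * (1 - x) := by field_simp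
  rw [recipEntropy, h, negMulLog_mul, binEntropy_eq_negMulLog_add_negMulLog_one_sub]
  simp only [negMulLog, log_inv]
  field_simp
  ring

lemma hasDerivAt_recipEntropy {v : ℝ} (hv : 1 < v) : HasDerivAt recipEntropy (logRatio v) v := by
  have h := ((hasDerivAt_negMulLog (by linarith : v - 1 ≠ 0)).comp v
    ((hasDerivAt_id v).sub_const 1)).sub (hasDerivAt_negMulLog (by linarith : v ≠ 0))
  refine h.congr_deriv ?_
  simp only [logRatio]
  ring

namespace Boppana

noncomputable def defect (u : ℝ) : ℝ := recipEntropy (u ^ 2) - φ * recipEntropy u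

noncomputable def defect₁ (u : ℝ) : ℝ := 2 * u * logRatio (u ^ 2) - φ * logRatio u

noncomputable def defect₂ (u : ℝ) : ℝ :=
  2 * logRatio (u ^ 2) - 4 / (u ^ 2 - 1) + φ / (u * (u - 1))

noncomputable def defect₃ (u : ℝ) : ℝ :=
  8 * u / (u ^ 2 - 1) ^ 2 - 4 / (u * (u ^ 2 - 1)) - φ * (2 * u - 1) / (u * (u - 1)) ^ 2

variable {u : ℝ}

lemma hasDerivAt_defect (hu : 1 < u) : HasDerivAt defect (defect₁ u) u := by
  have h := (hasDerivAt_recipEntropy (one_lt_pow₀ hu two_ne_zero)).comp_sq.sub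
    ((hasDerivAt_recipEntropy hu).const_mul φ)
  refine h.congr_deriv ?_
  rw [defect₁]
  ring

lemma hasDerivAt_defect₁ (hu : 1 < u) : HasDerivAt defect₁ (defect₂ u) u := by
  have h := (((hasDerivAt_id' u).const_mul 2).mul
    (hasDerivAt_logRatio (one_lt_pow₀ hu two_ne_zero)).comp_sq).sub
    ((hasDerivAt_logRatio hu).const_mul φ)
  refine h.congr_deriv ?_
  have : u - 1 ≠ 0 := by linarith
  have : u ^ 2 - 1 ≠ 0 := by nlinarith
  rw [defect₂]
  field_simp
  ring

lemma hasDerivAt_defect₂ (hu : 1 < u) : HasDerivAt defect₂ (defect₃ u) u := by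
  have h₁ : u - 1 ≠ 0 := by linarith
  have h₂ : u ^ 2 - 1 ≠ 0 := by nlinarith
  have h := (((hasDerivAt_logRatio (one_lt_pow₀ hu two_ne_zero)).comp_sq.const_mul 2).sub
    ((((hasDerivAt_pow 2 u).sub_const 1).inv h₂).const_mul 4)).add
    ((((hasDerivAt_id' u).mul ((hasDerivAt_id' u).sub_const 1)).inv
      (mul_ne_zero (by linarith) h₁)).const_mul φ)
  refine h.congr_deriv ?_
  simp only [defect₃, Pi.mul_apply]
  field_simp
  ring

lemma continuous_defect : Continuous defect := by
  unfold defect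
  fun_prop

lemma defect_one : defect 1 = 0 := by
  simp [defect, recipEntropy]

lemma defect_goldenRatio : defect φ = 0 := by
  have h : φ ^ 2 - 1 = φ := by linear_combination goldenRatio_sq
  simp only [defect, recipEntropy, h, goldenRatio_sub_one, negMulLog, log_inv, log_pow]
  linear_combination log φ * goldenRatio_sq - log φ * mul_inv_cancel₀ goldenRatio_ne_zero

lemma defect₁_goldenRatio : defect₁ φ = 0 := by
  have h : φ ^ 2 - 1 = φ := by linear_combination goldenRatio_sq
  simp only [defect₁, logRatio, h, goldenRatio_sub_one, log_inv, log_pow]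
  ring

lemma defect₃_nonneg (h₁ : 1 < u) (h₂ : u ≤ 27 / 20) : 0 ≤ defect₃ u := by
  have hφ := goldenRatio_mem_Ioo.2
  have key : 0 ≤ 4 * u ^ 3 + 4 * u - φ * ((2 * u - 1) * (u + 1) ^ 2) := by
    have : φ * ((2 * u - 1) * (u + 1) ^ 2) ≤ 1.62 * ((2 * u - 1) * (u + 1) ^ 2) :=
      mul_le_mul_of_nonneg_right hφ.le (mul_nonneg (by linarith) (by positivity))
    nlinarith [mul_nonneg (sub_nonneg.2 h₁.le) (sub_nonneg.2 h₂)]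
  have h : defect₃ u = (4 * u ^ 3 + 4 * u - φ * ((2 * u - 1) * (u + 1) ^ 2)) /
      (u * (u - 1) * (u + 1)) ^ 2 := by
    have : u - 1 ≠ 0 := by linarith
    have : u ^ 2 - 1 ≠ 0 := by nlinarith
    rw [defect₃]
    field_simp
    ring
  rw [h]
  positivity

lemma defect₂_nonneg (h₁ : 27 / 20 ≤ u) (h₂ : u ≤ 3) : 0 ≤ defect₂ u := by
  have hu : 1 < u := by linarith
  have hφ := goldenRatio_mem_Ioo.1
  have key : 0 ≤ φ * ((2 * u ^ 2 - 1) * (u + 1)) - 4 * u ^ 3 := by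
    have : 1.6 * ((2 * u ^ 2 - 1) * (u + 1)) ≤ φ * ((2 * u ^ 2 - 1) * (u + 1)) :=
      mul_le_mul_of_nonneg_right hφ.le (by nlinarith)
    nlinarith [mul_nonneg (sub_nonneg.2 h₁) (sub_nonneg.2 h₂)]
  have hlog : 4 / (2 * u ^ 2 - 1) ≤ 2 * logRatio (u ^ 2) := by
    have := two_div_le_logRatio (one_lt_pow₀ hu two_ne_zero)
    linarith [show 4 / (2 * u ^ 2 - 1) = 2 * (2 / (2 * u ^ 2 - 1)) by ring]
  have h : 4 / (2 * u ^ 2 - 1) - 4 / (u ^ 2 - 1) + φ / (u * (u - 1)) =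
      (φ * ((2 * u ^ 2 - 1) * (u + 1)) - 4 * u ^ 3) /
        (u * (u - 1) * (u + 1) * (2 * u ^ 2 - 1)) := by
    have : u - 1 ≠ 0 := by linarith
    have : u ^ 2 - 1 ≠ 0 := by nlinarith
    have : 2 * u ^ 2 - 1 ≠ 0 := by nlinarith
    field_simp
    ring
  have : 0 ≤ 4 / (2 * u ^ 2 - 1) - 4 / (u ^ 2 - 1) + φ / (u * (u - 1)) := by
    rw [h]
    have : 0 < u - 1 := by linarith
    have : 0 < 2 * u ^ 2 - 1 := by nlinarith
    positivity
  rw [defect₂]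
  linarith

lemma defect₂_eleven_tenths_neg : defect₂ (11 / 10) < 0 := by
  have hlog : logRatio ((11 / 10) ^ 2) ≤ 3 * log 2 := by
    rw [logRatio, ← log_div (by norm_num) (by norm_num), ← log_rpow (by norm_num)]
    exact log_le_log (by norm_num) (by norm_num)
  have := log_two_lt_d9
  have := goldenRatio_mem_Ioo.2
  rw [defect₂]
  norm_num
  linarith

lemma defect₁_nonneg (hu : 3 ≤ u) : 0 ≤ defect₁ u := by
  have h₁ : 1 < u := by linarith
  have : u ≠ 0 := by linarith
  have hφ := goldenRatio_mem_Ioo.2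
  have key : 2 * u * logRatio (u + 1) ≤ (2 * u - φ) * logRatio u :=
    calc 2 * u * logRatio (u + 1)
        ≤ 2 * u * ((2 * (u + 1) - 1) / (2 * (u + 1) * (u + 1 - 1))) :=
          mul_le_mul_of_nonneg_left (logRatio_le (by linarith)) (by positivity)
      _ = (2 * u + 1) / (u + 1) := by
          rw [add_sub_cancel_right]
          field_simp
          ring
      _ ≤ (2 * u - φ) * 2 / (2 * u - 1) := by
          rw [div_le_div_iff₀ (by positivity) (by linarith)]
          nlinarith
      _ ≤ (2 * u - φ) * logRatio u := by
          rw [mul_div_assoc]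
          exact mul_le_mul_of_nonneg_left (two_div_le_logRatio h₁) (by linarith)
  rw [defect₁, logRatio_sq h₁]
  linarith

lemma exists_inflection : ∃ r ∈ Icc (11 / 10 : ℝ) (27 / 20),
    (∀ u ∈ Ioc 1 r, defect₂ u ≤ 0) ∧ ∀ u ∈ Icc r 3, 0 ≤ defect₂ u := by
  have hmono : MonotoneOn defect₂ (Ioc 1 (27 / 20)) :=
    monotoneOn_of_forall_hasDerivAt (convex_Ioc _ _) (fun x hx => hasDerivAt_defect₂ hx.1)
      fun x hx => defect₃_nonneg hx.1 hx.2
  have hcont : ContinuousOn defect₂ (Icc (11 / 10) (27 / 20)) := fun x hx =>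
    (hasDerivAt_defect₂ (by linarith [hx.1])).continuousAt.continuousWithinAt
  obtain ⟨r, hr, hr₀⟩ := intermediate_value_Icc (by norm_num) hcont
    ⟨defect₂_eleven_tenths_neg.le, defect₂_nonneg le_rfl (by norm_num)⟩
  have hr₁ : r ∈ Ioc 1 (27 / 20) := ⟨by linarith [hr.1], hr.2⟩
  refine ⟨r, hr, fun u hu => hr₀ ▸ hmono ⟨hu.1, hu.2.trans hr.2⟩ hr₁ hu.2, fun u hu => ?_⟩
  rcases le_total u (27 / 20) with h | h
  · exact hr₀ ▸ hmono hr₁ ⟨hr₁.1.trans_le hu.1, h⟩ hu.1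
  · exact defect₂_nonneg h hu.2

lemma defect_nonneg (hu : 1 ≤ u) : 0 ≤ defect u := by
  obtain ⟨r, hr, hneg, hpos⟩ := exists_inflection
  have hr₁ : 1 < r := by linarith [hr.1]
  have hφ : φ ∈ Icc r 3 :=
    ⟨by linarith [hr.2, goldenRatio_mem_Ioo.1], by linarith [goldenRatio_mem_Ioo.2]⟩
  have hderiv : ∀ x ∈ Ici r, HasDerivAt defect (defect₁ x) x := fun x hx =>
    hasDerivAt_defect (hr₁.trans_le hx)
  have hmono₁ : MonotoneOn defect₁ (Icc r 3) :=
    monotoneOn_of_forall_hasDerivAt (convex_Icc _ _)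
      (fun x hx => hasDerivAt_defect₁ (hr₁.trans_le hx.1)) hpos
  have hmid : ∀ v ∈ Icc r 3, 0 ≤ defect v := by
    intro v hv
    rcases le_total v φ with h | h
    · have hanti : AntitoneOn defect (Icc r φ) :=
        antitoneOn_of_forall_hasDerivAt (convex_Icc _ _) (fun x hx => hderiv x hx.1)
          fun x hx => defect₁_goldenRatio ▸ hmono₁ ⟨hx.1, hx.2.trans hφ.2⟩ hφ hx.2
      exact defect_goldenRatio ▸ hanti ⟨hv.1, h⟩ ⟨hφ.1, le_rfl⟩ h
    · have hmono : MonotoneOn defect (Icc φ 3) :=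
        monotoneOn_of_forall_hasDerivAt (convex_Icc _ _)
          (fun x hx => hderiv x (hφ.1.trans hx.1))
          fun x hx => defect₁_goldenRatio ▸ hmono₁ hφ ⟨hφ.1.trans hx.1, hx.2⟩ hx.1
      exact defect_goldenRatio ▸ hmono ⟨le_rfl, hφ.2⟩ ⟨h, hv.2⟩ h
  rcases le_total u r with h | h
  · have hconc : ConcaveOn ℝ (Icc 1 r) defect := by
      refine concaveOn_of_hasDerivWithinAt2_nonpos (f' := defect₁) (f'' := defect₂)
        (convex_Icc _ _) continuous_defect.continuousOn (fun x hx => ?_) (fun x hx => ?_)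
        fun x hx => ?_ <;> rw [interior_Icc] at hx
      · exact (hasDerivAt_defect hx.1).hasDerivWithinAt
      · exact (hasDerivAt_defect₁ hx.1).hasDerivWithinAt
      · exact hneg x ⟨hx.1, hx.2.le⟩
    have := hconc.min_le_of_mem_Icc ⟨le_rfl, hr₁.le⟩ ⟨hr₁.le, le_rfl⟩ ⟨hu, h⟩
    rwa [defect_one, min_eq_left (hmid r ⟨le_rfl, by linarith [hr.2]⟩)] at this
  rcases le_total u 3 with h' | h'
  · exact hmid u ⟨h, h'⟩
  · have hmono : MonotoneOn defect (Ici 3) :=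
      monotoneOn_of_forall_hasDerivAt (convex_Ici _)
        (fun x hx => hderiv x (mem_Ici.2 (by linarith [hr.2, mem_Ici.1 hx])))
        fun x hx => defect₁_nonneg hx
    exact (hmid 3 ⟨by linarith [hr.2], le_rfl⟩).trans (hmono self_mem_Ici h' h')

end Boppana

lemma concaveOn_recipEntropy_exp : ConcaveOn ℝ (Ici 0) (fun s => recipEntropy (exp s)) := by
  refine concaveOn_of_hasDerivWithinAt2_nonpos (f' := fun s => exp s * logRatio (exp s))
    (f'' := fun s => exp s * logRatio (exp s) - exp s / (exp s - 1)) (convex_Ici 0)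
    (by fun_prop) (fun s hs => ?_) (fun s hs => ?_) fun s hs => ?_ <;>
  rw [interior_Ici] at hs <;> have hv : 1 < exp s := one_lt_exp_iff.2 hs
  · exact (((hasDerivAt_recipEntropy hv).comp s (hasDerivAt_exp s)).congr_deriv
      (mul_comm _ _)).hasDerivWithinAt
  · refine (((hasDerivAt_exp s).mul ((hasDerivAt_logRatio hv).comp s
      (hasDerivAt_exp s))).congr_deriv ?_).hasDerivWithinAt
    simp only [Function.comp_apply]
    field_simp [show exp s - 1 ≠ 0 by linarith]
    ring
  · have h : (2 * exp s - 1) / (2 * exp s * (exp s - 1)) ≤ 1 / (exp s - 1) := by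
      rw [div_le_div_iff₀ (by nlinarith) (by linarith)]
      nlinarith
    have := mul_le_mul_of_nonneg_left ((logRatio_le hv).trans h) (exp_pos s).le
    rw [mul_one_div] at this
    exact sub_nonpos.2 this

lemma binEntropy_exp_neg (s : ℝ) : binEntropy (exp (-s)) = exp (-s) * recipEntropy (exp s) := by
  rw [← inv_inv (exp s), ← exp_neg, recipEntropy_inv (exp_pos _)]
  field_simp [(exp_pos (-s)).ne']

theorem le_binEntropy_mul {x y : ℝ} (hx₀ : 0 ≤ x) (hx₁ : x ≤ 1) (hy₀ : 0 ≤ y) (hy₁ : y ≤ 1) :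
    φ / 2 * (y * binEntropy x + x * binEntropy y) ≤ binEntropy (x * y) := by
  rcases hx₀.eq_or_lt with rfl | hx₀
  · simp
  rcases hy₀.eq_or_lt with rfl | hy₀
  · simp
  set F := fun s => recipEntropy (exp s)
  obtain ⟨s, hs, rfl⟩ : ∃ s, 0 ≤ s ∧ x = exp (-s) :=
    ⟨-log x, neg_nonneg.2 (log_nonpos hx₀.le hx₁), by rw [neg_neg, exp_log hx₀]⟩
  obtain ⟨t, ht, rfl⟩ : ∃ t, 0 ≤ t ∧ y = exp (-t) :=
    ⟨-log y, neg_nonneg.2 (log_nonpos hy₀.le hy₁), by rw [neg_neg, exp_log hy₀]⟩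
  have hmid : F s + F t ≤ 2 * F ((s + t) / 2) := by
    have := concaveOn_recipEntropy_exp.2 hs ht (by norm_num : (0 : ℝ) ≤ 1 / 2)
      (by norm_num : (0 : ℝ) ≤ 1 / 2) (by norm_num)
    simp only [smul_eq_mul] at this
    rw [show (s + t) / 2 = 1 / 2 * s + 1 / 2 * t by ring]
    linarith
  have hdiag : φ * F ((s + t) / 2) ≤ F (s + t) := by
    have h := Boppana.defect_nonneg (one_le_exp (by linarith : 0 ≤ (s + t) / 2))
    rwa [Boppana.defect, ← exp_nat_mul, Nat.cast_ofNat, mul_div_cancel₀ _ two_ne_zero,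
      sub_nonneg] at h
  have key : φ * (F s + F t) / 2 ≤ F (s + t) := by
    nlinarith [mul_le_mul_of_nonneg_left hmid goldenRatio_pos.le]
  rw [← exp_add, ← neg_add, binEntropy_exp_neg, binEntropy_exp_neg, binEntropy_exp_neg]
  calc φ / 2 * (exp (-t) * (exp (-s) * F s) + exp (-s) * (exp (-t) * F t))
      = exp (-s) * exp (-t) * (φ * (F s + F t) / 2) := by ring
    _ ≤ exp (-s) * exp (-t) * F (s + t) := by gcongr
    _ = exp (-(s + t)) * F (s + t) := by rw [neg_add, exp_add]

/-- `(a + b) * binEntropy (a / (a + b))`, written without the division. -/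
noncomputable def splitEntropy (a b : ℝ) : ℝ := negMulLog a + negMulLog b - negMulLog (a + b)

lemma splitEntropy_mul (c a b : ℝ) : splitEntropy (c * a) (c * b) = c * splitEntropy a b := by
  simp only [splitEntropy, ← mul_add, negMulLog_mul]
  ring

lemma splitEntropy_eq {a b : ℝ} (ha : 0 ≤ a) (hb : 0 ≤ b) :
    splitEntropy a b = (a + b) * binEntropy (a / (a + b)) := by
  rcases (add_nonneg ha hb).eq_or_lt with h | h
  · obtain ⟨rfl, rfl⟩ : a = 0 ∧ b = 0 := ⟨by linarith, by linarith⟩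
    simp [splitEntropy]
  have ha' : a = (a + b) * (a / (a + b)) := by field_simp
  have hb' : b = (a + b) * (1 - a / (a + b)) := by field_simp; ring
  calc splitEntropy a b
      = splitEntropy ((a + b) * (a / (a + b))) ((a + b) * (1 - a / (a + b))) := by
        rw [← ha', ← hb']
    _ = (a + b) * binEntropy (a / (a + b)) := by
        rw [splitEntropy_mul, splitEntropy, add_sub_cancel,
          binEntropy_eq_negMulLog_add_negMulLog_one_sub, negMulLog_one, sub_zero]

theorem le_splitEntropy_mul {a₀ a₁ b₀ b₁ : ℝ} (ha₀ : 0 ≤ a₀) (ha₁ : 0 ≤ a₁) (hb₀ : 0 ≤ b₀)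
    (hb₁ : 0 ≤ b₁) :
    φ / 2 * (a₀ * splitEntropy b₀ b₁ + b₀ * splitEntropy a₀ a₁) ≤
      splitEntropy (a₀ * b₀) ((a₀ + a₁) * (b₀ + b₁) - a₀ * b₀) := by
  set x := a₀ / (a₀ + a₁)
  set y := b₀ / (b₀ + b₁)
  have hx : x ∈ Icc 0 1 := ⟨by positivity, div_le_one_of_le₀ (by linarith) (by positivity)⟩
  have hy : y ∈ Icc 0 1 := ⟨by positivity, div_le_one_of_le₀ (by linarith) (by positivity)⟩
  have hax : (a₀ + a₁) * x = a₀ := mul_div_cancel_of_imp' fun h => by linarith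
  have hby : (b₀ + b₁) * y = b₀ := mul_div_cancel_of_imp' fun h => by linarith
  have hab : a₀ * b₀ ≤ (a₀ + a₁) * (b₀ + b₁) := by
    apply mul_le_mul <;> linarith
  rw [splitEntropy_eq ha₀ ha₁, splitEntropy_eq hb₀ hb₁,
    splitEntropy_eq (mul_nonneg ha₀ hb₀) (sub_nonneg.2 hab), add_sub_cancel, mul_div_mul_comm]
  calc φ / 2 * (a₀ * ((b₀ + b₁) * binEntropy y) + b₀ * ((a₀ + a₁) * binEntropy x))
      = (a₀ + a₁) * (b₀ + b₁) * (φ / 2 * (y * binEntropy x + x * binEntropy y)) := by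
        linear_combination -(φ / 2 * binEntropy y * (b₀ + b₁)) * hax -
          φ / 2 * binEntropy x * (a₀ + a₁) * hby
    _ ≤ (a₀ + a₁) * (b₀ + b₁) * binEntropy (x * y) := by
        gcongr
        exact le_binEntropy_mul hx.1 hx.2 hy.1 hy.2

theorem le_sum_splitEntropy_mul {V W : Type*} [Fintype V] [Fintype W] {p₀ p₁ : V → ℝ}
    {q₀ q₁ : W → ℝ} (hp₀ : ∀ a, 0 ≤ p₀ a) (hp₁ : ∀ a, 0 ≤ p₁ a) (hq₀ : ∀ b, 0 ≤ q₀ b)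
    (hq₁ : ∀ b, 0 ≤ q₁ b) :
    φ / 2 * ((∑ a, p₀ a) * ∑ b, splitEntropy (q₀ b) (q₁ b) +
        (∑ b, q₀ b) * ∑ a, splitEntropy (p₀ a) (p₁ a)) ≤
      ∑ a, ∑ b, splitEntropy (p₀ a * q₀ b) ((p₀ a + p₁ a) * (q₀ b + q₁ b) - p₀ a * q₀ b) := by
  rw [Finset.sum_mul_sum, Finset.sum_mul_sum, Finset.sum_comm (s := Finset.univ (α := W)),
    ← Finset.sum_add_distrib, Finset.mul_sum]
  refine Finset.sum_le_sum fun a _ => ?_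
  rw [← Finset.sum_add_distrib, Finset.mul_sum]
  exact Finset.sum_le_sum fun b _ => le_splitEntropy_mul (hp₀ a) (hp₁ a) (hq₀ b) (hq₁ b)

section Probability

variable {Ω V W : Type*} [Fintype Ω] [Fintype V] [Fintype W] (μ : Ω → ℝ)

def IndepVars (X : Ω → V) (Y : Ω → W) : Prop :=
  ∀ a b, probOf μ (fun ω => X ω = a ∧ Y ω = b) =
    probOf μ (fun ω => X ω = a) * probOf μ (fun ω => Y ω = b)

lemma probOf_nonneg (hμ : ∀ ω, 0 ≤ μ ω) (E : Ω → Prop) : 0 ≤ probOf μ E :=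
  Finset.sum_nonneg fun ω _ => by split_ifs <;> simp [hμ ω]

lemma probOf_congr {E F : Ω → Prop} (h : ∀ ω, E ω ↔ F ω) : probOf μ E = probOf μ F := by
  rw [funext fun ω => propext (h ω)]

lemma probOf_false_add_probOf_true (Z : Ω → Bool) (E : Ω → Prop) :
    probOf μ (fun ω => Z ω = false ∧ E ω) + probOf μ (fun ω => Z ω = true ∧ E ω) =
      probOf μ E := by
  classical
  simp only [probOf, ← Finset.sum_add_distrib]
  refine Finset.sum_congr rfl fun ω _ => ?_
  rcases Bool.eq_false_or_eq_true (Z ω) with h | h <;> simp [h]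

lemma sum_probOf_and_eq (E : Ω → Prop) (Y : Ω → W) :
    ∑ y, probOf μ (fun ω => E ω ∧ Y ω = y) = probOf μ E := by
  classical
  simp only [probOf]
  rw [Finset.sum_comm]
  refine Finset.sum_congr rfl fun ω _ => ?_
  by_cases h : E ω <;> simp [h]

open scoped Classical in
lemma probOf_comp (X : Ω → V) (E : V → Prop) :
    probOf μ (fun ω => E (X ω)) = ∑ v, if E v then probOf μ (fun ω => X ω = v) else 0 := by
  rw [← sum_probOf_and_eq μ _ X]
  refine Finset.sum_congr rfl fun v _ => ?_
  split_ifs with h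
  · exact probOf_congr μ fun ω => ⟨And.right, fun hv => ⟨hv ▸ h, hv⟩⟩
  · simp only [probOf]
    exact Finset.sum_eq_zero fun ω _ => if_neg fun hω : E (X ω) ∧ X ω = v => h (hω.2 ▸ hω.1)

lemma IndepVars.probOf_and {X : Ω → V} {Y : Ω → W} (h : IndepVars μ X Y) (E : V → Prop)
    (F : W → Prop) :
    probOf μ (fun ω => E (X ω) ∧ F (Y ω)) =
      probOf μ (fun ω => E (X ω)) * probOf μ (fun ω => F (Y ω)) := by
  classical
  rw [probOf_comp μ (fun ω => (X ω, Y ω)) fun p => E p.1 ∧ F p.2, probOf_comp μ X,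
    probOf_comp μ Y, Finset.sum_mul_sum, Fintype.sum_prod_type]
  refine Finset.sum_congr rfl fun a _ => Finset.sum_congr rfl fun b _ => ?_
  simp only [Prod.mk.injEq, h a b, ite_zero_mul_ite_zero]

lemma IndepVars.comp {V' W' : Type*} {X : Ω → V} {Y : Ω → W} (h : IndepVars μ X Y)
    (f : V → V') (g : W → W') : IndepVars μ (fun ω => f (X ω)) (fun ω => g (Y ω)) :=
  fun a b => h.probOf_and μ (fun v => f v = a) (fun w => g w = b)

lemma entropy_eq_sum_negMulLog (X : Ω → V) :
    entropy μ X = (∑ v, negMulLog (probOf μ (fun ω => X ω = v))) / log 2 := by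
  rw [entropy, Finset.sum_div]
  refine Finset.sum_congr rfl fun v _ => ?_
  rw [negMulLog, logb]
  ring

lemma condEntropy_bool (Z : Ω → Bool) (Y : Ω → W) :
    condEntropy μ Z Y = (∑ y, splitEntropy (probOf μ (fun ω => Z ω = false ∧ Y ω = y))
      (probOf μ (fun ω => Z ω = true ∧ Y ω = y))) / log 2 := by
  rw [condEntropy, entropy_eq_sum_negMulLog, entropy_eq_sum_negMulLog, ← sub_div,
    Fintype.sum_prod_type, Fintype.sum_bool, ← Finset.sum_add_distrib, ← Finset.sum_sub_distrib]
  congr 1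
  refine Finset.sum_congr rfl fun y _ => ?_
  simp only [Prod.mk.injEq, splitEntropy, ← probOf_false_add_probOf_true μ Z fun ω => Y ω = y]
  ring

theorem le_condEntropy_or (hμ : ∀ ω, 0 ≤ μ ω) (X₀ Y₀ : Ω → Bool) (X : Ω → V) (Y : Ω → W)
    (hind : IndepVars μ (fun ω => (X₀ ω, X ω)) (fun ω => (Y₀ ω, Y ω))) :
    φ / 2 * (probOf μ (fun ω => X₀ ω = false) * condEntropy μ Y₀ Y +
        probOf μ (fun ω => Y₀ ω = false) * condEntropy μ X₀ X) ≤
      condEntropy μ (fun ω => X₀ ω || Y₀ ω) (fun ω => (X ω, Y ω)) := by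
  set p : Bool → V → ℝ := fun z a => probOf μ (fun ω => X₀ ω = z ∧ X ω = a)
  set q : Bool → W → ℝ := fun z b => probOf μ (fun ω => Y₀ ω = z ∧ Y ω = b)
  have hfalse : ∀ a b, probOf μ (fun ω => (X₀ ω || Y₀ ω) = false ∧ (X ω, Y ω) = (a, b)) =
      p false a * q false b := fun a b =>
    (probOf_congr μ fun ω => by simp only [Bool.or_eq_false_iff, Prod.mk.injEq]; tauto).trans
      (hind.probOf_and μ (fun x => x.1 = false ∧ x.2 = a) fun y => y.1 = false ∧ y.2 = b)
  have hpair : ∀ a b, probOf μ (fun ω => (X ω, Y ω) = (a, b)) =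
      (p false a + p true a) * (q false b + q true b) := fun a b => by
    rw [probOf_congr μ fun ω => Prod.ext_iff,
      hind.probOf_and μ (fun x => x.2 = a) fun y => y.2 = b]
    simp only [p, q, probOf_false_add_probOf_true]
  have htrue : ∀ a b, probOf μ (fun ω => (X₀ ω || Y₀ ω) = true ∧ (X ω, Y ω) = (a, b)) =
      (p false a + p true a) * (q false b + q true b) - p false a * q false b := fun a b => by
    have := probOf_false_add_probOf_true μ (fun ω => X₀ ω || Y₀ ω) fun ω => (X ω, Y ω) = (a, b)
    rw [← hpair, ← hfalse]
    linarith
  rw [condEntropy_bool, condEntropy_bool, condEntropy_bool, Fintype.sum_prod_type,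
    ← sum_probOf_and_eq μ _ X, ← sum_probOf_and_eq μ _ Y]
  simp only [hfalse, htrue]
  rw [mul_div_assoc', mul_div_assoc', ← add_div, mul_div_assoc']
  exact div_le_div_of_nonneg_right (le_sum_splitEntropy_mul (fun _ => probOf_nonneg μ hμ _)
    (fun _ => probOf_nonneg μ hμ _) (fun _ => probOf_nonneg μ hμ _)
    fun _ => probOf_nonneg μ hμ _) (log_nonneg one_le_two)

end Probability

theorem condEntropy_union_coord_general {Ω : Type*} [Fintype Ω] {n : ℕ}
    (μ : Ω → ℝ) (hμ0 : ∀ ω, 0 ≤ μ ω)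
    (A B : Ω → Fin n → Bool)
    (hind : ∀ a b : Fin n → Bool,
      probOf μ (fun ω => A ω = a ∧ B ω = b) =
        probOf μ (fun ω => A ω = a) * probOf μ (fun ω => B ω = b))
    (i : Fin n) :
    condEntropy μ (fun ω => A ω i || B ω i)
        (fun ω => (below (A ω) i, below (B ω) i)) ≥
      1 / (2 * ((Real.sqrt 5 - 1) / 2)) *
        (probOf μ (fun ω => A ω i = false) *
            condEntropy μ (fun ω => B ω i) (fun ω => below (B ω) i) +
          probOf μ (fun ω => B ω i = false) *
            condEntropy μ (fun ω => A ω i) (fun ω => below (A ω) i)) := by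
  have hconst : 1 / (2 * ((√5 - 1) / 2)) = φ / 2 := by
    have h5 : √5 ^ 2 = 5 := sq_sqrt (by norm_num)
    have : √5 - 1 ≠ 0 := by nlinarith
    rw [goldenRatio]
    field_simp
    linear_combination -h5
  rw [ge_iff_le, hconst]
  exact le_condEntropy_or μ hμ0 _ _ _ _
    (IndepVars.comp μ hind (fun v => (v i, below v i)) fun v => (v i, below v i))

/-- If `A, B` are independent random variables with values in `{0,1}^n`, then for every
coordinate `i`,
`H((A ∪ B)_i | A_{<i}, B_{<i}) ≥ (1/(2φ)) (Pr[A_i = 0] H(B_i | B_{<i}) + Pr[B_i = 0] H(A_i | A_{<i}))`,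
where `φ = (√5-1)/2` and the union is coordinatewise. -/
theorem condEntropy_union_coord {Ω : Type*} [Fintype Ω] {n : ℕ}
    (μ : Ω → ℝ) (hμ0 : ∀ ω, 0 ≤ μ ω) (hμ1 : ∑ ω, μ ω = 1)
    (A B : Ω → Fin n → Bool)
    (hind : ∀ a b : Fin n → Bool,
      probOf μ (fun ω => A ω = a ∧ B ω = b) =
        probOf μ (fun ω => A ω = a) * probOf μ (fun ω => B ω = b))
    (i : Fin n) :
    condEntropy μ (fun ω => A ω i || B ω i)
        (fun ω => (below (A ω) i, below (B ω) i)) ≥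
      1 / (2 * ((Real.sqrt 5 - 1) / 2)) *
        (probOf μ (fun ω => A ω i = false) *
            condEntropy μ (fun ω => B ω i) (fun ω => below (B ω) i) +
          probOf μ (fun ω => B ω i = false) *
            condEntropy μ (fun ω => A ω i) (fun ω => below (A ω) i)) :=
  condEntropy_union_coord_general μ hμ0 A B hind i
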